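/- arXiv:1006.1231 — 6 statements merged into one kernel-verified Lean document; each statement's English description precedes it below -/
import Mathlib

section
/- Let H = (V,E) be a k-graph with |E| ≤ |V| that has Property D_δ for some δ > 0, and let h be an orientation of E. Then for every α > 0 there exists C = C(α,δ) > 0 (one may take C = ⌈log_{1−δ} α⌉) and a set S ⊆ V with |S| ≥ (1−α)|V| such that every v ∈ S satisfies d_h(v, F_h) ≤ C. -/
open Filter Real

attribute [local instance] Classical.propDecidable

/-- `nset edges h v t` is the set of vertices within `h`-distance at most `t` from `v`:
the union of the `0`th through `t`-th `h`-neighborhoods of `v`. -/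
noncomputable def nset {V ι : Type} [Fintype V] [DecidableEq V] [Fintype ι]
    (edges : ι → Multiset V) (h : ι → V) (v : V) : ℕ → Finset V
  | 0 => {v}
  | t + 1 =>
    nset edges h v t ∪
      Finset.univ.filter (fun w : V => ∃ i : ι, h i ∈ nset edges h v t ∧ w ∈ edges i)

/-!
Call a vertex *trapped at depth `t`* if every vertex within `h`-distance `t` of it is occupied.
A vertex trapped at depth `t + 1` is occupied, by an edge all of whose vertices are trapped at
depth `t`; since `h` is a function, the trapped vertices at depth `t + 1` thus number at most the
edges spanned by those trapped at depth `t`, which by Property `D_δ` is at most `1 - δ` times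
their number. Hence at most `(1 - δ)^C |V| ≤ α |V|` vertices are trapped at depth `C` once
`(1 - δ)^C ≤ α`, and all the others have a free vertex within distance `C`.
-/

section Orientation

variable {V ι : Type} [Fintype V] [DecidableEq V] [Fintype ι]
  (edges : ι → Multiset V) (h : ι → V)

/-- The edges all of whose vertices lie in `V'`; their number is `e(V')`. -/
def edgesWithin (V' : Finset V) : Finset ι :=
  Finset.univ.filter (fun i : ι => ∀ v ∈ edges i, v ∈ V')

def HasPropertyD (δ : ℝ) : Prop :=
  ∀ V' : Finset V, V'.Nonempty → ((edgesWithin edges V').card : ℝ) < (1 - δ) * V'.card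

noncomputable def trapped (t : ℕ) : Finset V :=
  Finset.univ.filter (fun v => ∀ w ∈ nset edges h v t, ∃ i, h i = w)

theorem mem_nset_succ {v x : V} {t : ℕ} :
    x ∈ nset edges h v (t + 1) ↔
      x ∈ nset edges h v t ∨ ∃ i, h i ∈ nset edges h v t ∧ x ∈ edges i := by
  rw [nset]
  simp only [Finset.mem_union, Finset.mem_filter, Finset.mem_univ, true_and]

theorem nset_subset_nset_succ (v : V) (t : ℕ) : nset edges h v t ⊆ nset edges h v (t + 1) :=
  fun _ hx => (mem_nset_succ edges h).2 (Or.inl hx)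

theorem self_mem_nset (v : V) : ∀ t, v ∈ nset edges h v t
  | 0 => by simp [nset]
  | t + 1 => nset_subset_nset_succ edges h v t (self_mem_nset v t)

theorem nset_subset_nset_succ_of_mem {i : ι} {w : V} (hw : w ∈ edges i) :
    ∀ t, nset edges h w t ⊆ nset edges h (h i) (t + 1)
  | 0 => by
    intro x hx
    rw [show x = w by simpa [nset] using hx]
    exact (mem_nset_succ edges h).2 (Or.inr ⟨i, by simp [nset], hw⟩)
  | t + 1 => by
    intro x hx
    rw [mem_nset_succ] at hx ⊢
    rcases hx with hx | ⟨j, hj, hx⟩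
    · exact Or.inl (nset_subset_nset_succ_of_mem hw t hx)
    · exact Or.inr ⟨j, nset_subset_nset_succ_of_mem hw t hj, hx⟩

theorem trapped_succ_subset (t : ℕ) : trapped edges h (t + 1) ⊆ trapped edges h t := by
  intro v hv
  simp only [trapped, Finset.mem_filter, Finset.mem_univ, true_and] at hv ⊢
  exact fun w hw => hv w (nset_subset_nset_succ edges h v t hw)

theorem trapped_succ_subset_image (t : ℕ) :
    trapped edges h (t + 1) ⊆ (edgesWithin edges (trapped edges h t)).image h := by
  intro v hv
  simp only [trapped, Finset.mem_filter, Finset.mem_univ, true_and] at hv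
  obtain ⟨i, rfl⟩ := hv v (self_mem_nset edges h v (t + 1))
  refine Finset.mem_image_of_mem h ?_
  simp only [edgesWithin, trapped, Finset.mem_filter, Finset.mem_univ, true_and]
  exact fun w hw u hu => hv u (nset_subset_nset_succ_of_mem edges h hw t hu)

theorem card_trapped_succ_le_card_edgesWithin (t : ℕ) :
    (trapped edges h (t + 1)).card ≤ (edgesWithin edges (trapped edges h t)).card :=
  (Finset.card_le_card (trapped_succ_subset_image edges h t)).trans Finset.card_image_le

variable {edges}

theorem HasPropertyD.one_sub_pos [Nonempty V] {δ : ℝ} (hD : HasPropertyD edges δ) :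
    0 < 1 - δ := by
  obtain ⟨v⟩ := ‹Nonempty V›
  have := hD {v} (Finset.singleton_nonempty v)
  rw [Finset.card_singleton, Nat.cast_one, mul_one] at this
  exact (Nat.cast_nonneg _).trans_lt this

theorem HasPropertyD.card_trapped_succ_le {δ : ℝ} (hD : HasPropertyD edges δ) (t : ℕ) :
    ((trapped edges h (t + 1)).card : ℝ) ≤ (1 - δ) * (trapped edges h t).card := by
  rcases (trapped edges h t).eq_empty_or_nonempty with hempty | hne
  · have := Finset.subset_empty.1 (hempty ▸ trapped_succ_subset edges h t)
    simp [this, hempty]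
  · exact (Nat.cast_le.2 (card_trapped_succ_le_card_edgesWithin edges h t)).trans (hD _ hne).le

theorem HasPropertyD.card_trapped_le {δ : ℝ} (hD : HasPropertyD edges δ) :
    ∀ t, ((trapped edges h t).card : ℝ) ≤ (1 - δ) ^ t * Fintype.card V := by
  rcases isEmpty_or_nonempty V with hV | hV
  · intro t
    simp [Subsingleton.elim (trapped edges h t) ∅]
  intro t
  induction t with
  | zero => simpa using Finset.card_le_univ _
  | succ t ih =>
    calc ((trapped edges h (t + 1)).card : ℝ) ≤ (1 - δ) * (trapped edges h t).card :=
          hD.card_trapped_succ_le h t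
      _ ≤ (1 - δ) * ((1 - δ) ^ t * Fintype.card V) :=
          mul_le_mul_of_nonneg_left ih hD.one_sub_pos.le
      _ = (1 - δ) ^ (t + 1) * Fintype.card V := by ring

theorem HasPropertyD.exists_card_compl_trapped_ge {δ α : ℝ} (hD : HasPropertyD edges δ)
    (hδ : 0 < δ) (hα : 0 < α) :
    ∃ C : ℕ, 0 < C ∧ (1 - α) * Fintype.card V ≤ ((trapped edges h C)ᶜ.card : ℝ) := by
  rcases isEmpty_or_nonempty V with hV | hV
  · exact ⟨1, one_pos, by simp⟩
  obtain ⟨n, hn⟩ := exists_pow_lt_of_lt_one hα (sub_lt_self 1 hδ)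
  have hdecay : (1 - δ) ^ (n + 1) ≤ α :=
    (pow_le_pow_of_le_one hD.one_sub_pos.le (sub_lt_self 1 hδ).le n.le_succ).trans hn.le
  refine ⟨n + 1, n.succ_pos, ?_⟩
  rw [Finset.card_compl, Nat.cast_sub (Finset.card_le_univ _)]
  have := hD.card_trapped_le h (n + 1)
  linarith [mul_le_mul_of_nonneg_right hdecay (Nat.cast_nonneg (α := ℝ) (Fintype.card V))]

end Orientation

theorem statement_3_general (V ι : Type) [Fintype V] [DecidableEq V] [Fintype ι]
    (edges : ι → Multiset V)
    (δ : ℝ) (hδ : 0 < δ)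
    (hD : ∀ V' : Finset V, V'.Nonempty →
      ((Finset.univ.filter (fun i : ι => ∀ v ∈ edges i, v ∈ V')).card : ℝ)
        < (1 - δ) * V'.card)
    (h : ι → V)
    (α : ℝ) (hα : 0 < α) :
    ∃ C : ℕ, 0 < C ∧
      ∃ S : Finset V, (1 - α) * Fintype.card V ≤ (S.card : ℝ) ∧
        ∀ v ∈ S, ∃ w ∈ nset edges h v C, ∀ i : ι, h i ≠ w := by
  obtain ⟨C, hC, hcard⟩ := HasPropertyD.exists_card_compl_trapped_ge h hD hδ hα
  refine ⟨C, hC, (trapped edges h C)ᶜ, hcard, fun v hv => ?_⟩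
  simpa [trapped] using hv

/-- if a `k`-graph `H = (V,E)` with `|E| ≤ |V|` has Property `D_δ` and `h` is
an orientation of `E`, then for every `α > 0` there is `C > 0` and a set `S ⊆ V` with
`|S| ≥ (1-α)|V|` such that every `v ∈ S` has a free vertex within `h`-distance `C`. -/
theorem statement_3 (k : ℕ) (hk : 3 ≤ k) (V ι : Type) [Fintype V] [DecidableEq V] [Fintype ι]
    (edges : ι → Multiset V) (hsize : ∀ i, (edges i).card ≤ k)
    (hEV : Fintype.card ι ≤ Fintype.card V)
    (δ : ℝ) (hδ : 0 < δ)
    (hD : ∀ V' : Finset V, V'.Nonempty →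
      ((Finset.univ.filter (fun i : ι => ∀ v ∈ edges i, v ∈ V')).card : ℝ)
        < (1 - δ) * V'.card)
    (h : ι → V) (hinj : Function.Injective h) (hmem : ∀ i, h i ∈ edges i)
    (α : ℝ) (hα : 0 < α) :
    ∃ C : ℕ, 0 < C ∧
      ∃ S : Finset V, (1 - α) * Fintype.card V ≤ (S.card : ℝ) ∧
        ∀ v ∈ S, ∃ w ∈ nset edges h v C, ∀ i : ι, h i ≠ w :=
  statement_3_general V ι edges δ hδ hD h α hα
end

section
/- Let k ≥ 3 and let H = (V,E) be a k-graph in which every edge contains at least two vertices, such that (1) the core of H has Property D_δ for some 0 < δ < 1/4, and (2) H has Property 𝓔. Then there exists ζ ∈ (0,1), depending only on δ and k, such that H itself has Property D_{ζδ}. -/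
open Filter Real

attribute [local instance] Classical.propDecidable

/-- Edge set of the core: the union of all edge subsets `F` in which every covered vertex
has degree (counted with multiplicity) at least `2`; this union is the maximum such set. -/
noncomputable def coreEdges {V ι : Type} [Fintype V] [DecidableEq V] [Fintype ι]
    (edges : ι → Multiset V) : Finset ι :=
  Finset.univ.filter (fun i : ι =>
    ∃ F : Finset ι,
      (∀ v : V, (∃ j ∈ F, v ∈ edges j) → 2 ≤ ∑ j ∈ F, (edges j).count v) ∧ i ∈ F)

/-- Vertex set of the core. -/
noncomputable def coreVerts {V ι : Type} [Fintype V] [DecidableEq V] [Fintype ι]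
    (edges : ι → Multiset V) : Finset V :=
  Finset.univ.filter (fun v : V => ∃ i ∈ coreEdges edges, v ∈ edges i)

/-- `x_s = log_k((k-1)e^k) / (log_k(n/s) - 1)`. -/
noncomputable def xval (k n : ℕ) (s : ℝ) : ℝ :=
  Real.logb k (((k : ℝ) - 1) * Real.exp k) / (Real.logb k ((n : ℝ) / s) - 1)

/-- Property `𝓔` for a `k`-graph with vertex type `V` and edges indexed by `ι`. -/
def PropE {V ι : Type} [Fintype V] [DecidableEq V] [Fintype ι]
    (k : ℕ) (edges : ι → Multiset V) : Prop :=
  (∀ E' : Finset ι,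
    Real.log (Real.log (Fintype.card V)) < (E'.card : ℝ) →
    (E'.card : ℝ) < (Fintype.card V : ℝ) / k →
      ((k : ℝ) - 1 - xval k (Fintype.card V) E'.card) * E'.card
        ≤ (((E'.biUnion fun i => (edges i).toFinset).card : ℕ) : ℝ)) ∧
  (∀ E' : Finset ι, (E'.card : ℝ) ≤ Real.log (Real.log (Fintype.card V)) →
      ((k : ℝ) - 1) * E'.card
        ≤ (((E'.biUnion fun i => (edges i).toFinset).card : ℕ) : ℝ))


/-!
Split the edges spanned by `V'` into core and non-core edges; the core edges are controlled by
Property `D_δ` of the core. A nonempty set `F` of non-core edges has a vertex outside the core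
lying in exactly one edge of `F` (otherwise `F` together with the core would have minimum degree
two), so `F` can be peeled one edge at a time, each edge taking a private vertex outside the core
with it. Hence `F` spans at least `|F|` vertices outside the core. Moreover Property `𝓔` gives
`|V(F')| ≥ 3|F'|/2` as soon as `n / |F'| ≥ K := k ^ (1 + 2 log_k((k-1)e^k))`, since then
`x_{|F'|} ≤ 1/2`; peeling `F` down to `⌊n/K⌋` edges (or, when `n < K`, down to one edge, which
has two distinct vertices) yields `|F| ≤ (1 - γ)|V(F)|` with `γ = 1/(4K)`. Averaging the two
bounds on the non-core edges with weights `1 - δ` and `δ` gives `e(V') ≤ (1 - γδ)|V'|`, so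
`ζ = γ/2` works.
-/

open Finset

section Peeling

variable {V ι : Type} [DecidableEq V] {edges : ι → Multiset V}

def MinDegTwo (edges : ι → Multiset V) (F : Finset ι) : Prop :=
  ∀ v : V, (∃ j ∈ F, v ∈ edges j) → 2 ≤ ∑ j ∈ F, (edges j).count v

def vertsOf (edges : ι → Multiset V) (F : Finset ι) : Finset V :=
  F.biUnion fun i => (edges i).toFinset

lemma mem_vertsOf {F : Finset ι} {v : V} : v ∈ vertsOf edges F ↔ ∃ i ∈ F, v ∈ edges i := by
  simp [vertsOf]

lemma vertsOf_mono {F G : Finset ι} (h : F ⊆ G) : vertsOf edges F ⊆ vertsOf edges G :=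
  biUnion_subset_biUnion_of_subset_left _ h

variable [Fintype V] [Fintype ι]

lemma mem_coreEdges {i : ι} : i ∈ coreEdges edges ↔ ∃ F, MinDegTwo edges F ∧ i ∈ F := by
  simp [coreEdges, MinDegTwo]

lemma mem_coreVerts {v : V} : v ∈ coreVerts edges ↔ ∃ i ∈ coreEdges edges, v ∈ edges i := by
  simp [coreVerts]

lemma MinDegTwo.subset_coreEdges {F : Finset ι} (h : MinDegTwo edges F) :
    F ⊆ coreEdges edges :=
  fun _ hi => mem_coreEdges.2 ⟨F, h, hi⟩

lemma minDegTwo_coreEdges : MinDegTwo edges (coreEdges edges) := by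
  rintro v ⟨i, hi, hvi⟩
  obtain ⟨F, hF, hiF⟩ := mem_coreEdges.1 hi
  exact (hF v ⟨i, hiF, hvi⟩).trans (sum_le_sum_of_subset hF.subset_coreEdges)

lemma exists_private_vertex {F : Finset ι} (hne : F.Nonempty)
    (hF : Disjoint F (coreEdges edges)) :
    ∃ i ∈ F, ∃ v ∈ edges i, v ∉ coreVerts edges ∧ ∀ j ∈ F, j ≠ i → v ∉ edges j := by
  by_contra! h
  have hmin : MinDegTwo edges (F ∪ coreEdges edges) := by
    rintro v ⟨j, hj, hvj⟩
    by_cases hv : v ∈ coreVerts edges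
    · obtain ⟨i, hi, hvi⟩ := mem_coreVerts.1 hv
      exact (minDegTwo_coreEdges v ⟨i, hi, hvi⟩).trans (sum_le_sum_of_subset subset_union_right)
    · have hjF : j ∈ F :=
        (mem_union.1 hj).resolve_right fun hjC => hv (mem_coreVerts.2 ⟨j, hjC, hvj⟩)
      obtain ⟨j', hj', hj'j, hvj'⟩ := h j hjF v hvj hv
      calc 2 ≤ (edges j').count v + (edges j).count v := by
            have := Multiset.one_le_count_iff_mem.2 hvj
            have := Multiset.one_le_count_iff_mem.2 hvj'
            omega
        _ = ∑ l ∈ {j', j}, (edges l).count v := by rw [sum_pair hj'j]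
        _ ≤ ∑ l ∈ F ∪ coreEdges edges, (edges l).count v :=
            sum_le_sum_of_subset (insert_subset (mem_union_left _ hj') (by simpa using hj))
  obtain ⟨i, hi⟩ := hne
  exact disjoint_left.1 hF hi (hmin.subset_coreEdges (mem_union_left _ hi))

lemma two_le_card_toFinset_of_notMem_coreEdges {i : ι} (hi : i ∉ coreEdges edges)
    (h2 : 2 ≤ Multiset.card (edges i)) : 2 ≤ #(edges i).toFinset := by
  by_contra! h
  obtain ⟨v, hv⟩ := Multiset.card_pos_iff_exists_mem.1 (by omega : 0 < Multiset.card (edges i))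
  have hall : ∀ u ∈ edges i, v = u := fun u hu =>
    card_le_one.1 (by omega) v (Multiset.mem_toFinset.2 hv) u (Multiset.mem_toFinset.2 hu)
  refine hi (MinDegTwo.subset_coreEdges (F := {i}) ?_ (mem_singleton_self i))
  rintro u ⟨j, hj, huj⟩
  obtain rfl := mem_singleton.1 hj
  rw [sum_singleton, ← hall u huj, Multiset.count_eq_card.2 hall]
  exact h2

lemma exists_subset_card_le_add_card_sdiff {F : Finset ι} (hF : Disjoint F (coreEdges edges))
    {s : ℕ} (hs : s ≤ #F) : ∃ F' ⊆ F, #F' = s ∧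
      #F ≤ s + #(vertsOf edges F \ (vertsOf edges F' ∪ coreVerts edges)) := by
  induction F using Finset.strongInduction with
  | H F ih =>
  rcases hs.eq_or_lt with rfl | hlt
  · exact ⟨F, subset_rfl, rfl, le_self_add⟩
  obtain ⟨i, hi, v, hvi, hvC, hpriv⟩ := exists_private_vertex (card_pos.1 (by omega)) hF
  obtain ⟨F', hF', rfl, hle⟩ := ih (F.erase i) (erase_ssubset hi)
    (hF.mono_left (erase_subset i F)) (by rw [card_erase_of_mem hi]; omega)
  refine ⟨F', hF'.trans (erase_subset i F), rfl, ?_⟩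
  have hv : v ∉ vertsOf edges (F.erase i) := fun hv => by
    obtain ⟨j, hj, hvj⟩ := mem_vertsOf.1 hv
    exact hpriv j (mem_of_mem_erase hj) (ne_of_mem_erase hj) hvj
  have hsub : insert v (vertsOf edges (F.erase i) \ (vertsOf edges F' ∪ coreVerts edges)) ⊆
      vertsOf edges F \ (vertsOf edges F' ∪ coreVerts edges) := by
    refine insert_subset ?_ (sdiff_subset_sdiff (vertsOf_mono (erase_subset i F)) subset_rfl)
    refine mem_sdiff.2 ⟨mem_vertsOf.2 ⟨i, hi, hvi⟩, ?_⟩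
    intro hvF'C
    rcases mem_union.1 hvF'C with hvF' | hvC'
    exacts [hv (vertsOf_mono hF' hvF'), hvC hvC']
  have := card_le_card hsub
  rw [card_insert_of_notMem fun h => hv (mem_sdiff.1 h).1] at this
  rw [card_erase_of_mem hi] at hle
  omega

lemma card_le_card_vertsOf_sdiff_coreVerts {F : Finset ι} (hF : Disjoint F (coreEdges edges)) :
    #F ≤ #(vertsOf edges F \ coreVerts edges) := by
  obtain ⟨F', -, hF', hle⟩ := exists_subset_card_le_add_card_sdiff hF (Nat.zero_le _)
  rw [card_eq_zero.1 hF'] at hle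
  simpa [vertsOf] using hle

lemma exists_subset_card_add_card_vertsOf_le {F : Finset ι} (hF : Disjoint F (coreEdges edges))
    {s : ℕ} (hs : s ≤ #F) :
    ∃ F' ⊆ F, #F' = s ∧ #F + #(vertsOf edges F') ≤ s + #(vertsOf edges F) := by
  obtain ⟨F', hF'F, hF's, hle⟩ := exists_subset_card_le_add_card_sdiff hF hs
  refine ⟨F', hF'F, hF's, ?_⟩
  have h₁ := card_le_card (sdiff_subset_sdiff (subset_refl (vertsOf edges F))
    (subset_union_left (s₂ := coreVerts edges) (s₁ := vertsOf edges F')))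
  have h₂ := card_sdiff_add_card_eq_card (vertsOf_mono (edges := edges) hF'F)
  omega

lemma card_add_one_le_card_vertsOf {F : Finset ι} (h2 : ∀ i ∈ F, 2 ≤ Multiset.card (edges i))
    (hF : Disjoint F (coreEdges edges)) (hne : F.Nonempty) : #F + 1 ≤ #(vertsOf edges F) := by
  obtain ⟨F', hF'F, hF'1, hle⟩ := exists_subset_card_add_card_vertsOf_le hF (card_pos.2 hne)
  obtain ⟨i, rfl⟩ := card_eq_one.1 hF'1
  have hi := hF'F (mem_singleton_self i)
  have h₁ := two_le_card_toFinset_of_notMem_coreEdges (disjoint_left.1 hF hi) (h2 i hi)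
  have h₂ : vertsOf edges {i} = (edges i).toFinset := by simp [vertsOf]
  rw [h₂] at hle
  omega

end Peeling

section XHalfRatio

noncomputable def xHalfRatio (k : ℕ) : ℝ :=
  (k : ℝ) ^ (1 + 2 * logb k (((k : ℝ) - 1) * exp k))

variable {k : ℕ}

lemma logb_sub_one_mul_exp_pos (hk : 3 ≤ k) : 0 < logb k (((k : ℝ) - 1) * exp k) := by
  have hk3 : (3 : ℝ) ≤ k := by exact_mod_cast hk
  refine logb_pos (by linarith) ?_
  nlinarith [one_le_exp (Nat.cast_nonneg (α := ℝ) k)]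

lemma lt_xHalfRatio (hk : 3 ≤ k) : (k : ℝ) < xHalfRatio k := by
  have hk1 : (1 : ℝ) < k := by exact_mod_cast (by omega : 1 < k)
  calc (k : ℝ) = (k : ℝ) ^ (1 : ℝ) := (rpow_one _).symm
    _ < xHalfRatio k :=
      rpow_lt_rpow_of_exponent_lt hk1 (by linarith [logb_sub_one_mul_exp_pos hk])

lemma three_lt_xHalfRatio (hk : 3 ≤ k) : 3 < xHalfRatio k := by
  have hk3 : (3 : ℝ) ≤ k := by exact_mod_cast hk
  linarith [lt_xHalfRatio hk]

lemma xval_le_half (hk : 3 ≤ k) {n : ℕ} {s : ℝ} (hs : 0 < s) (hsn : s * xHalfRatio k ≤ n) :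
    xval k n s ≤ 1 / 2 := by
  have hL := logb_sub_one_mul_exp_pos hk
  have hk1 : (1 : ℝ) < k := by exact_mod_cast (by omega : 1 < k)
  have hlog : 1 + 2 * logb k (((k : ℝ) - 1) * exp k) ≤ logb k (n / s) := by
    have : logb k (xHalfRatio k) ≤ logb k (n / s) :=
      logb_le_logb_of_le hk1 (rpow_pos_of_pos (by linarith) _)
        ((le_div_iff₀ hs).2 (by linarith [mul_comm s (xHalfRatio k)]))
    rwa [xHalfRatio, logb_rpow (by linarith) (by linarith)] at this
  rw [xval, div_le_iff₀ (by linarith)]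
  linarith

end XHalfRatio

section Sparsity

variable {k : ℕ} {V ι : Type} [Fintype V] [DecidableEq V] [Fintype ι] {edges : ι → Multiset V}

lemma three_halves_mul_card_le_card_vertsOf (hk : 3 ≤ k) (hE : PropE k edges) {F : Finset ι}
    (hF : 0 < #F) (hFn : #F * xHalfRatio k ≤ Fintype.card V) :
    3 / 2 * (#F : ℝ) ≤ #(vertsOf edges F) := by
  have hk3 : (3 : ℝ) ≤ k := by exact_mod_cast hk
  have hF0 : (0 : ℝ) < #F := by exact_mod_cast hF
  by_cases hlog : (#F : ℝ) ≤ log (log (Fintype.card V))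
  · have : ((k : ℝ) - 1) * #F ≤ #(vertsOf edges F) := hE.2 F hlog
    nlinarith
  · have hFk : (#F : ℝ) < Fintype.card V / k := by
      rw [lt_div_iff₀ (by linarith)]
      exact (mul_lt_mul_of_pos_left (lt_xHalfRatio hk) hF0).trans_le hFn
    have : ((k : ℝ) - 1 - xval k (Fintype.card V) #F) * #F ≤ #(vertsOf edges F) :=
      hE.1 F (not_le.1 hlog) hFk
    have := xval_le_half hk hF0 hFn
    nlinarith

lemma card_le_one_sub_mul_card_vertsOf (hk : 3 ≤ k) (hE : PropE k edges) {F : Finset ι}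
    (h2 : ∀ i ∈ F, 2 ≤ Multiset.card (edges i)) (hF : Disjoint F (coreEdges edges)) :
    (#F : ℝ) ≤ (1 - 1 / (4 * xHalfRatio k)) * #(vertsOf edges F) := by
  have hK := three_lt_xHalfRatio hk
  set K := xHalfRatio k
  set n := Fintype.card V
  have hγ : 1 / (4 * K) ≤ 1 / 12 := by gcongr; linarith
  have hVn : (#(vertsOf edges F) : ℝ) ≤ n := by exact_mod_cast card_le_univ _
  have hV0 : (0 : ℝ) ≤ #(vertsOf edges F) := Nat.cast_nonneg _
  rcases F.eq_empty_or_nonempty with rfl | hne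
  · simp [vertsOf]
  by_cases hFn : #F * K ≤ n
  · have := three_halves_mul_card_le_card_vertsOf hk hE (card_pos.2 hne) hFn
    nlinarith
  by_cases hKn : K ≤ n
  · -- peel `F` down to `s = ⌊n / K⌋` edges, the largest size at which `x_s ≤ 1/2`
    set s := ⌊n / K⌋₊
    have hs1 : 1 ≤ s := Nat.one_le_floor_iff _ |>.2 ((one_le_div (by linarith)).2 hKn)
    have hsK : (s : ℝ) * K ≤ n := (le_div_iff₀ (by linarith)).1 (Nat.floor_le (by positivity))
    have hsF : s ≤ #F := by
      have : (s : ℝ) < #F := lt_of_mul_lt_mul_right (hsK.trans_lt (not_le.1 hFn)) (by linarith)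
      exact_mod_cast this.le
    have hns : (n : ℝ) / K < 2 * s := by
      have := Nat.lt_floor_add_one ((n : ℝ) / K)
      have : (1 : ℝ) ≤ s := by exact_mod_cast hs1
      linarith
    obtain ⟨F', -, hF's, hle⟩ := exists_subset_card_add_card_vertsOf_le hF hsF
    have h32 := three_halves_mul_card_le_card_vertsOf hk hE (edges := edges) (F := F')
      (by omega) (by rw [hF's]; exact hsK)
    rw [hF's] at h32
    have hle' : (#F : ℝ) + #(vertsOf edges F') ≤ s + #(vertsOf edges F) := by exact_mod_cast hle
    have hγV : 1 / (4 * K) * #(vertsOf edges F) ≤ (n / K) / 4 := by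
      rw [div_div, mul_comm K 4, one_div_mul_eq_div]
      gcongr
    nlinarith
  · have hcast : (#F : ℝ) + 1 ≤ #(vertsOf edges F) := by
      exact_mod_cast card_add_one_le_card_vertsOf h2 hF hne
    have hγV : 1 / (4 * K) * #(vertsOf edges F) ≤ 1 := by
      rw [one_div_mul_eq_div, div_le_one (by linarith)]
      linarith
    nlinarith

lemma card_le_one_sub_mul_card_inter_coreVerts {δ : ℝ}
    (hcore : ∀ V' : Finset V, V' ⊆ coreVerts edges → V'.Nonempty →
      ((#((coreEdges edges).filter fun i : ι => ∀ v ∈ edges i, v ∈ V')) : ℝ) < (1 - δ) * #V')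
    {E : Finset ι} {U : Finset V} (hne : ∀ i ∈ E, edges i ≠ 0) (hE : E ⊆ coreEdges edges)
    (hEU : vertsOf edges E ⊆ U) : (#E : ℝ) ≤ (1 - δ) * #(U ∩ coreVerts edges) := by
  have hsub : E ⊆ (coreEdges edges).filter fun i => ∀ v ∈ edges i, v ∈ U ∩ coreVerts edges :=
    fun i hi => mem_filter.2 ⟨hE hi, fun v hv =>
      mem_inter.2 ⟨hEU (mem_vertsOf.2 ⟨i, hi, hv⟩), mem_coreVerts.2 ⟨i, hE hi, hv⟩⟩⟩
  rcases (U ∩ coreVerts edges).eq_empty_or_nonempty with hUC | hUC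
  · have : E = ∅ := eq_empty_of_forall_notMem fun i hi => by
      obtain ⟨v, hv⟩ := Multiset.exists_mem_of_ne_zero (hne i hi)
      simpa [hUC] using (mem_filter.1 (hsub hi)).2 v hv
    simp [this, hUC]
  · exact (by exact_mod_cast card_le_card hsub : (#E : ℝ) ≤ _).trans
      (hcore _ inter_subset_right hUC).le

lemma card_spanned_le_one_sub_mul_card (hk : 3 ≤ k) {δ : ℝ} (hδ0 : 0 ≤ δ) (hδ1 : δ ≤ 1)
    (h2 : ∀ i, 2 ≤ Multiset.card (edges i))
    (hcore : ∀ V' : Finset V, V' ⊆ coreVerts edges → V'.Nonempty →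
      ((#((coreEdges edges).filter fun i : ι => ∀ v ∈ edges i, v ∈ V')) : ℝ) < (1 - δ) * #V')
    (hE : PropE k edges) (V' : Finset V) :
    (#(univ.filter fun i : ι => ∀ v ∈ edges i, v ∈ V') : ℝ)
      ≤ (1 - 1 / (4 * xHalfRatio k) * δ) * #V' := by
  set γ := 1 / (4 * xHalfRatio k)
  have hγ1 : γ ≤ 1 := by
    have := three_lt_xHalfRatio hk
    rw [div_le_one (by linarith)]
    linarith
  set S := univ.filter fun i : ι => ∀ v ∈ edges i, v ∈ V'
  set C := coreEdges edges
  have hSV : vertsOf edges S ⊆ V' := fun v hv => by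
    obtain ⟨i, hi, hvi⟩ := mem_vertsOf.1 hv
    exact (mem_filter.1 hi).2 v hvi
  set E₁ := S.filter (· ∈ C)
  set E₂ := S.filter (· ∉ C)
  have hsplit : (#S : ℝ) = #E₁ + #E₂ := by exact_mod_cast (card_filter_add_card_filter_not _).symm
  have hE₁ : (#E₁ : ℝ) ≤ (1 - δ) * #(V' ∩ coreVerts edges) :=
    card_le_one_sub_mul_card_inter_coreVerts hcore
      (fun i _ => Multiset.card_pos.1 (by have := h2 i; omega))
      (fun i hi => (mem_filter.1 hi).2) ((vertsOf_mono (filter_subset _ _)).trans hSV)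
  have hE₂C : Disjoint E₂ C := disjoint_left.2 fun i hi => (mem_filter.1 hi).2
  have hE₂V' : vertsOf edges E₂ ⊆ V' := (vertsOf_mono (filter_subset _ _)).trans hSV
  have hE₂ : (#E₂ : ℝ) ≤ #(V' \ coreVerts edges) := by
    exact_mod_cast (card_le_card_vertsOf_sdiff_coreVerts hE₂C).trans
      (card_le_card (sdiff_subset_sdiff hE₂V' subset_rfl))
  have hE₂γ : (#E₂ : ℝ) ≤ (1 - γ) * #V' :=
    (card_le_one_sub_mul_card_vertsOf hk hE (fun i _ => h2 i) hE₂C).trans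
      (mul_le_mul_of_nonneg_left (by exact_mod_cast card_le_card hE₂V') (by linarith))
  have hV' : (#(V' ∩ coreVerts edges) : ℝ) + #(V' \ coreVerts edges) = #V' := by
    exact_mod_cast card_inter_add_card_sdiff V' (coreVerts edges)
  nlinarith [mul_le_mul_of_nonneg_left hE₂ (by linarith : 0 ≤ 1 - δ),
    mul_le_mul_of_nonneg_left hE₂γ hδ0]

end Sparsity

/-- let `k ≥ 3` and `0 < δ < 1/4`. There is `ζ ∈ (0,1)`, depending only on
`δ` and `k`, such that every `k`-graph whose edges all contain at least two vertices,
whose core has Property `D_δ`, and which has Property `𝓔`, itself has Property `D_{ζδ}`. -/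
theorem statement_5 (k : ℕ) (hk : 3 ≤ k) (δ : ℝ) (hδ0 : 0 < δ) (hδ : δ < 1 / 4) :
    ∃ ζ : ℝ, 0 < ζ ∧ ζ < 1 ∧
      ∀ (V ι : Type) [Fintype V] [DecidableEq V] [Fintype ι]
        (edges : ι → Multiset V),
        (∀ i, (edges i).card ≤ k) →
        (∀ i, 2 ≤ (edges i).card) →
        (∀ V' : Finset V, V' ⊆ coreVerts edges → V'.Nonempty →
          (((coreEdges edges).filter (fun i : ι => ∀ v ∈ edges i, v ∈ V')).card : ℝ)
            < (1 - δ) * V'.card) →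
        PropE k edges →
        (∀ V' : Finset V, V'.Nonempty →
          ((Finset.univ.filter (fun i : ι => ∀ v ∈ edges i, v ∈ V')).card : ℝ)
            < (1 - ζ * δ) * V'.card) := by
  have hK := three_lt_xHalfRatio hk
  have hγ : 0 < 1 / (4 * xHalfRatio k) := by positivity
  refine ⟨1 / (4 * xHalfRatio k) / 2, by positivity, ?_, ?_⟩
  · rw [div_div, div_lt_one (by positivity)]
    linarith
  intro V ι _ _ _ edges _ h2 hcore hE V' hV'
  have hV'pos : (0 : ℝ) < #V' := by exact_mod_cast card_pos.2 hV'
  calc _ ≤ (1 - 1 / (4 * xHalfRatio k) * δ) * #V' :=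
        card_spanned_le_one_sub_mul_card hk hδ0.le (by linarith) h2 hcore hE V'
    _ < _ := by nlinarith [mul_pos (mul_pos hγ hδ0) hV'pos]
end

section
/- Let k ≥ 3 and set c := log_k((k−1)e^k)/((k−1)·log_k(k−1)). For every sufficiently small α > 0 and every ζ > 0 there exists n_0 such that for all n ≥ n_0 the following holds. Let H = (V,E) be a k-graph on n vertices having Property 𝓔, let h be any orientation of its edges, and set T := log_{k−1} n + (c+ζ)·log_{k−1} log_{k−1} n. If v ∈ V is such that no vertex within h-distance at most T from v is free, then N_{h,T}(v) > αn. -/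
/-
If every vertex within `h`-distance `T` of `v` is occupied, then for `t < T` the `N_t` edges
oriented into the `t`-th ball are distinct and span a subset of the next ball, so Property 𝓔
gives `N_{t+1} ≥ (k - 1 - x_{N_t}) N_t`. With `y_t = log (n / N_t)` and `B = log (k - 1) + k`
this reads `y_{t+1} ≤ y_t - log (k - 1 - B / (y_t - log k))`, and `y_t` stays large while
`N_t ≤ αn`. For `y` beyond a threshold, every step lowers `y + c' log y` by at least
`log (k - 1)` whenever `c' > c = B / ((k - 1) log (k - 1))`, because
`log (k - 1) - log (k - 1 - x) ≈ x / (k - 1)`; below the threshold each step lowers `y` by at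
least `log (k / 2)`. Starting from `y_0 = log n`, this allows at most
`log_{k-1} n + c' log_{k-1} log n + O(1) < T` steps.
-/

open Filter Real

attribute [local instance] Classical.propDecidable

/-- The constant `c = log_k((k-1)e^k) / ((k-1)·log_k(k-1))`. -/
noncomputable def cconst (k : ℕ) : ℝ :=
  Real.logb k (((k : ℝ) - 1) * Real.exp k) / (((k : ℝ) - 1) * Real.logb k ((k : ℝ) - 1))

/-- `T = log_{k-1} n + (c+ζ)·log_{k-1} log_{k-1} n`. -/
noncomputable def Tval (k : ℕ) (ζ : ℝ) (n : ℕ) : ℝ :=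
  Real.logb ((k : ℝ) - 1) n +
    (cconst k + ζ) * Real.logb ((k : ℝ) - 1) (Real.logb ((k : ℝ) - 1) n)

open Finset Topology

lemma log_sub_log_sub_le {K x : ℝ} (hx : 0 < K - x) (hK : 0 < K) :
    log K - log (K - x) ≤ x / (K - x) := by
  have := log_le_sub_one_of_pos (div_pos hK hx)
  rw [log_div hK.ne' hx.ne'] at this
  calc log K - log (K - x) ≤ K / (K - x) - 1 := this
    _ = x / (K - x) := by field_simp; ring

lemma div_le_log_sub_log {y y' d : ℝ} (hy' : 0 < y') (hd : 0 ≤ d) (h : y' ≤ y - d) :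
    d / y ≤ log y - log y' := by
  have hy : 0 < y := by linarith
  have := one_sub_inv_le_log_of_pos (div_pos hy hy')
  rw [log_div hy.ne' hy'.ne', inv_div] at this
  calc d / y ≤ (y - y') / y := by gcongr; linarith
    _ = 1 - y' / y := by field_simp
    _ ≤ _ := this

lemma lt_log_div_of_le_mul {A α N n : ℝ} (hα : 0 < α) (hαA : α < exp (-A)) (hN : 0 < N)
    (hNn : N ≤ α * n) : A < log (n / N) := by
  have hn : 0 < n := pos_of_mul_pos_right (hN.trans_le hNn) hα.le
  have : log N ≤ log α + log n := by
    rw [← log_mul hα.ne' hn.ne']; exact log_le_log hN hNn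
  have : log α < -A := (log_lt_iff_lt_exp hα).2 hαA
  rw [log_div hn.ne' hN.ne']
  linarith

lemma lt_div_of_log_lt_log_div {a N n : ℝ} (ha : 0 < a) (hN : 0 < N) (hn : 0 < n)
    (h : log a < log (n / N)) : N < n / a := by
  have := (log_lt_log_iff ha (div_pos hn hN)).1 h
  rw [lt_div_iff₀ hN] at this
  rw [lt_div_iff₀ ha]; linarith

lemma log_div_le_log_div_sub_log {n N N' q : ℝ} (hn : 0 < n) (hN : 0 < N) (hq : 0 < q)
    (h : q * N ≤ N') : log (n / N') ≤ log (n / N) - log q := by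
  have hqN := mul_pos hq hN
  rw [← log_div (div_pos hn hN).ne' hq.ne', div_div, mul_comm]
  exact log_le_log (div_pos hn (hqN.trans_le h)) (div_le_div_of_nonneg_left hn.le hqN h)

section Potential

variable {Y c ℓ r : ℝ}

/-- The drop by `ℓ` just below the threshold `Y` pays for the step that crosses it. -/
noncomputable def descentPotential (Y c ℓ r z : ℝ) : ℝ :=
  if Y ≤ z then z + c * log z else Y + c * log Y - ℓ - r * (Y - z)

lemma descentPotential_of_le {z : ℝ} (hz : Y ≤ z) :
    descentPotential Y c ℓ r z = z + c * log z :=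
  if_pos hz

lemma descentPotential_add_le (hY : 0 < Y) (hc : 0 ≤ c) (hr : 0 ≤ r) {y y' d : ℝ} (hd : 0 < d)
    (hstep : y' ≤ y - d) (hlow : ℓ ≤ r * d) (hhigh : Y ≤ y → ℓ ≤ d + c * d / y) :
    descentPotential Y c ℓ r y' + ℓ ≤ descentPotential Y c ℓ r y := by
  unfold descentPotential
  by_cases hy' : Y ≤ y' <;> by_cases hy : Y ≤ y <;> simp only [hy', hy, if_true, if_false]
  · have := div_le_log_sub_log (by linarith) hd.le hstep
    have : c * (d / y) ≤ c * (log y - log y') := mul_le_mul_of_nonneg_left this hc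
    rw [mul_div_assoc] at hhigh
    linarith [hhigh hy]
  · linarith
  · have : log Y ≤ log y := log_le_log hY hy
    nlinarith
  · nlinarith

lemma le_descentPotential (hY : 0 < Y) (hc : 0 ≤ c) (hℓ : 0 ≤ ℓ) (hr : 0 ≤ r) {z : ℝ}
    (hz : 0 ≤ z) : Y + c * log Y - ℓ - r * Y ≤ descentPotential Y c ℓ r z := by
  unfold descentPotential
  split_ifs with hYz
  · have : log Y ≤ log z := log_le_log hY hYz
    nlinarith
  · nlinarith

end Potential

section Drift

variable {K a B c : ℝ}

lemma eventually_log_le_log_sub_div (hK : 1 < K) (hc : B / (K * log K) < c) :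
    ∀ᶠ y in atTop, log K ≤ log (K - B / (y - a)) + c * log (K - B / (y - a)) / y := by
  have hlogK : 0 < log K := log_pos hK
  set x : ℝ → ℝ := fun y => B / (y - a) with hx_def
  have hx : Tendsto x atTop (𝓝 0) := by
    refine tendsto_const_nhds.div_atTop ?_
    simpa [sub_eq_add_neg] using tendsto_atTop_add_const_right atTop (-a) tendsto_id
  have hF : Tendsto (fun y => (B + a * x y) / (K - x y)) atTop (𝓝 (B / K)) := by
    have := (tendsto_const_nhds (x := B)).add (hx.const_mul a) |>.div
      (tendsto_const_nhds (x := K) |>.sub hx) (by simp; linarith)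
    rw [mul_zero, add_zero, sub_zero] at this
    exact this
  have hG : Tendsto (fun y => c * log (K - x y)) atTop (𝓝 (c * log K)) := by
    have := ((tendsto_const_nhds (x := K)).sub hx).log (by simp; linarith) |>.const_mul c
    simpa using this
  have hlt : B / K < c * log K := by
    rw [div_lt_iff₀ (by positivity)] at hc
    rw [div_lt_iff₀ (by linarith)]
    linarith
  filter_upwards [hF.eventually_lt hG hlt, hx.eventually (gt_mem_nhds (by linarith : (0:ℝ) < K)),
    eventually_gt_atTop (max a 0)] with y hFG hxK hy
  have hya : 0 < y - a := by linarith [le_max_left a 0]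
  have hy0 : 0 < y := by linarith [le_max_right a 0]
  have hKx : 0 < K - x y := by linarith
  have hid : x y / (K - x y) = (B + a * x y) / (K - x y) / y := by
    simp only [hx_def]
    field_simp
    ring
  have := log_sub_log_sub_le hKx (by linarith)
  have : (B + a * x y) / (K - x y) / y < c * log (K - x y) / y := by gcongr
  linarith

lemma half_add_one_le_sub_div (hK : 1 < K) (hB : 0 < B) {y : ℝ}
    (hy : a + 2 * B / (K - 1) ≤ y) : (K + 1) / 2 ≤ K - B / (y - a) := by
  have h2B : 0 < 2 * B / (K - 1) := div_pos (by linarith) (by linarith)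
  have : B / (y - a) ≤ B / (2 * B / (K - 1)) := by gcongr; linarith
  have : B / (2 * B / (K - 1)) = (K - 1) / 2 := by field_simp
  linarith

theorem exists_mul_log_le_of_log_drift (hK : 1 < K) (ha : 0 ≤ a) (hB : 0 < B)
    (hc : B / (K * log K) < c) :
    ∃ Y C : ℝ, ∀ (y : ℕ → ℝ) (T : ℕ), Y ≤ y 0 → (∀ t ≤ T, a + 2 * B / (K - 1) ≤ y t) →
      (∀ t < T, y (t + 1) ≤ y t - log (K - B / (y t - a))) →
      T * log K ≤ y 0 + c * log (y 0) + C := by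
  have hlogK : 0 < log K := log_pos hK
  have hc0 : 0 ≤ c := le_trans (by positivity) hc.le
  set μ := log ((K + 1) / 2)
  have hμ : 0 < μ := log_pos (by linarith)
  set r := log K / μ
  have hr : 0 ≤ r := by positivity
  have hrμ : r * μ = log K := div_mul_cancel₀ _ hμ.ne'
  obtain ⟨Y, hY⟩ := eventually_atTop.1
    ((eventually_log_le_log_sub_div (a := a) hK hc).and (eventually_gt_atTop 0))
  have hY0 : 0 < Y := (hY Y le_rfl).2
  set φ := descentPotential Y c (log K) r
  refine ⟨Y, log K + r * Y - Y - c * log Y, fun y T hy0 hlb hrec => ?_⟩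
  have hdrift : ∀ t ≤ T, μ ≤ log (K - B / (y t - a)) := fun t ht =>
    log_le_log (by linarith) (half_add_one_le_sub_div hK hB (hlb t ht))
  have hinv : ∀ t ≤ T, φ (y t) + t * log K ≤ φ (y 0) := by
    intro t
    induction t with
    | zero => simp
    | succ t ih =>
      intro ht
      have hstep : φ (y (t + 1)) + log K ≤ φ (y t) :=
        descentPotential_add_le hY0 hc0 hr (hμ.trans_le (hdrift t (by omega))) (hrec t ht)
          (hrμ ▸ mul_le_mul_of_nonneg_left (hdrift t (by omega)) hr)
          (fun h => (hY (y t) h).1)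
      push_cast
      linarith [ih (by omega)]
  have hyT : 0 ≤ y T := by
    have : 0 < 2 * B / (K - 1) := div_pos (by linarith) (by linarith)
    linarith [hlb T le_rfl]
  have := le_descentPotential hY0 hc0 hlogK.le hr hyT (ℓ := log K)
  rw [← descentPotential_of_le hy0 (c := c) (ℓ := log K) (r := r)]
  linarith [hinv T le_rfl]

end Drift

lemma card_filter_mem_eq_card {α β : Type} [Fintype α] [DecidableEq β] {f : α → β}
    (hf : Function.Injective f) {s : Finset β} (hs : ∀ b ∈ s, ∃ a, f a = b) :
    #(univ.filter fun a => f a ∈ s) = #s := by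
  refine card_nbij f (fun a ha => (mem_filter.1 ha).2) hf.injOn fun b hb => ?_
  obtain ⟨a, rfl⟩ := hs b hb
  exact ⟨a, by simpa using hb, rfl⟩

section Neighbourhoods

variable {V ι : Type} [Fintype V] [DecidableEq V] [Fintype ι]
  {edges : ι → Multiset V} {h : ι → V} {v : V}

lemma mem_nset_self (t : ℕ) : v ∈ nset edges h v t := by
  induction t with
  | zero => simp [nset]
  | succ t ih => exact mem_union_left _ ih

lemma nset_mono : Monotone (nset edges h v) :=
  monotone_nat_of_le_succ fun _ => subset_union_left

variable (edges h v) in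
lemma biUnion_filter_subset_nset_succ (t : ℕ) :
    (univ.filter fun i => h i ∈ nset edges h v t).biUnion (fun i => (edges i).toFinset)
      ⊆ nset edges h v (t + 1) := by
  intro w hw
  obtain ⟨i, hi, hwi⟩ := mem_biUnion.1 hw
  exact mem_union_right _ (mem_filter.2 ⟨mem_univ w, i, (mem_filter.1 hi).2,
    Multiset.mem_toFinset.1 hwi⟩)

end Neighbourhoods

lemma xval_eq {k : ℕ} (hk : 2 ≤ k) (n : ℕ) (s : ℝ) :
    xval k n s = (log ((k : ℝ) - 1) + k) / (log (n / s) - log k) := by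
  have hk1 : (1 : ℝ) < k := by exact_mod_cast hk
  have hlogk : log k ≠ 0 := (log_pos hk1).ne'
  rw [xval, logb, logb, log_mul (by linarith) (exp_ne_zero _), log_exp]
  field_simp

lemma PropE.card_nset_succ_ge {V ι : Type} [Fintype V] [DecidableEq V] [Fintype ι] {k : ℕ}
    (hk : 2 ≤ k) {edges : ι → Multiset V} (hE : PropE k edges) {h : ι → V}
    (hinj : Function.Injective h) {v : V} {t : ℕ}
    (hocc : ∀ w ∈ nset edges h v t, ∃ i, h i = w)
    (hsmall : (#(nset edges h v t) : ℝ) < Fintype.card V / k) :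
    ((k : ℝ) - 1 - xval k (Fintype.card V) #(nset edges h v t)) * #(nset edges h v t)
      ≤ #(nset edges h v (t + 1)) := by
  set E' := univ.filter fun i => h i ∈ nset edges h v t
  have hcard : #E' = #(nset edges h v t) := card_filter_mem_eq_card hinj hocc
  have hspan : (#(E'.biUnion fun i => (edges i).toFinset) : ℝ) ≤ #(nset edges h v (t + 1)) := by
    exact_mod_cast card_le_card (biUnion_filter_subset_nset_succ edges h v t)
  rw [← hcard]
  rcases lt_or_ge (Real.log (Real.log (Fintype.card V))) #E' with hlarge | hsmall'
  · exact (hE.1 E' hlarge (hcard ▸ hsmall)).trans hspan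
  · have hpos : (0 : ℝ) < #E' := by
      rw [hcard]; exact_mod_cast card_pos.2 ⟨v, mem_nset_self t⟩
    have hk2 : (2 : ℝ) ≤ k := by exact_mod_cast hk
    have hgt : (k : ℝ) < Fintype.card V / #E' := by
      rw [lt_div_iff₀ hpos, hcard]
      rwa [lt_div_iff₀ (by positivity), mul_comm] at hsmall
    have : 0 ≤ xval k (Fintype.card V) #E' := by
      rw [xval_eq hk]
      have : log k < log (Fintype.card V / #E') := log_lt_log (by positivity) hgt
      have : 0 ≤ log ((k : ℝ) - 1) := log_nonneg (by linarith)
      have : 0 < log (Fintype.card V / #E') - log k := by linarith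
      positivity
    nlinarith [hE.2 E' hsmall']

lemma PropE.log_div_card_nset_succ_le {V ι : Type} [Fintype V] [DecidableEq V] [Fintype ι]
    {k : ℕ} (hk : 3 ≤ k) {edges : ι → Multiset V} (hE : PropE k edges) {h : ι → V}
    (hinj : Function.Injective h) {v : V} {t : ℕ}
    (hocc : ∀ w ∈ nset edges h v t, ∃ i, h i = w)
    (hy : log k + 2 * (log ((k : ℝ) - 1) + k) / ((k : ℝ) - 1 - 1)
      ≤ log (Fintype.card V / #(nset edges h v t))) :
    log (Fintype.card V / #(nset edges h v (t + 1)))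
      ≤ log (Fintype.card V / #(nset edges h v t)) - log ((k : ℝ) - 1
        - (log ((k : ℝ) - 1) + k) / (log (Fintype.card V / #(nset edges h v t)) - log k)) := by
  have hk3 : (3 : ℝ) ≤ k := by exact_mod_cast hk
  have hB : 0 < log ((k : ℝ) - 1) + k := by
    have := log_pos (by linarith : (1 : ℝ) < k - 1); positivity
  have hN : (0 : ℝ) < #(nset edges h v t) := by exact_mod_cast card_pos.2 ⟨v, mem_nset_self t⟩
  have hn : (0 : ℝ) < Fintype.card V := Fintype.card_pos_iff.2 ⟨v⟩ |> Nat.cast_pos.2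
  have hq := half_add_one_le_sub_div (by linarith) hB hy
  have hsmall : (#(nset edges h v t) : ℝ) < Fintype.card V / k :=
    lt_div_of_log_lt_log_div (by positivity) hN hn
      ((lt_add_of_pos_right _ (div_pos (by linarith) (by linarith))).trans_le hy)
  have hgrow := hE.card_nset_succ_ge (by omega) hinj hocc hsmall
  rw [xval_eq (by omega)] at hgrow
  exact log_div_le_log_div_sub_log hn hN (by linarith) hgrow

lemma cconst_eq {k : ℕ} (hk : 2 ≤ k) :
    cconst k = (log ((k : ℝ) - 1) + k) / (((k : ℝ) - 1) * log ((k : ℝ) - 1)) := by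
  have hk1 : (1 : ℝ) < k := by exact_mod_cast hk
  have hlogk : log k ≠ 0 := (log_pos hk1).ne'
  rw [cconst, logb, logb, log_mul (by linarith) (exp_ne_zero _), log_exp]
  field_simp

lemma Tval_mul_log {k : ℕ} (hk : 3 ≤ k) (ζ : ℝ) {n : ℕ} (hn : 2 ≤ n) :
    Tval k ζ n * log ((k : ℝ) - 1)
      = log n + (cconst k + ζ) * (log (log n) - log (log ((k : ℝ) - 1))) := by
  have hK : (1 : ℝ) < (k : ℝ) - 1 := by
    have : (3 : ℝ) ≤ k := by exact_mod_cast hk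
    linarith
  have hn1 : (1 : ℝ) < n := by exact_mod_cast hn
  rw [Tval, logb, logb, log_div (log_pos hn1).ne' (log_pos hK).ne']
  field_simp [(log_pos hK).ne']

/-- for `k ≥ 3`, all sufficiently small `α > 0`, all `ζ > 0` and all large
`n`: in any `k`-graph on `n` vertices with Property `𝓔`, with any orientation `h`,
if no vertex within `h`-distance `T` of `v` is free then `N_{h,T}(v) > αn`. -/
theorem statement_7 (k : ℕ) (hk : 3 ≤ k) :
    ∃ α₀ : ℝ, 0 < α₀ ∧ ∀ α : ℝ, 0 < α → α < α₀ → ∀ ζ : ℝ, 0 < ζ →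
      ∃ n₀ : ℕ, ∀ n : ℕ, n₀ ≤ n →
        ∀ (V ι : Type) [Fintype V] [DecidableEq V] [Fintype ι],
          Fintype.card V = n →
          ∀ (edges : ι → Multiset V), (∀ i, (edges i).card ≤ k) → PropE k edges →
          ∀ (h : ι → V), Function.Injective h → (∀ i, h i ∈ edges i) →
          ∀ v : V,
            (∀ w ∈ nset edges h v ⌊Tval k ζ n⌋₊, ∃ i : ι, h i = w) →
            α * n < ((nset edges h v ⌊Tval k ζ n⌋₊).card : ℝ) := by
  set K : ℝ := k - 1
  set B : ℝ := log K + k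
  have hk3 : (3 : ℝ) ≤ k := by exact_mod_cast hk
  have hK : 1 < K := by linarith
  have hB : 0 < B := by have := log_pos hK; positivity
  refine ⟨exp (-(log k + 2 * B / (K - 1))), exp_pos _, fun α hα hαlt ζ hζ => ?_⟩
  obtain ⟨Y, C, hdescent⟩ := exists_mul_log_le_of_log_drift (a := log k) (c := cconst k + ζ / 2)
    hK (log_nonneg (by linarith)) hB (by rw [cconst_eq (by omega)]; linarith)
  have hlog : Tendsto (fun n : ℕ => log n) atTop atTop :=
    tendsto_log_atTop.comp tendsto_natCast_atTop_atTop
  obtain ⟨n₀, hn₀⟩ := eventually_atTop.1 <| (eventually_ge_atTop 2).and <|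
    (hlog.eventually_ge_atTop Y).and <|
    ((tendsto_log_atTop.comp hlog).const_mul_atTop (half_pos hζ)).eventually_gt_atTop
      (C + log K + (cconst k + ζ) * log (log K))
  refine ⟨n₀, fun n hn V ι _ _ _ hcard edges _ hE h hinj _ v hocc => ?_⟩
  obtain ⟨hn2, hYn, hlarge⟩ := hn₀ n hn
  subst hcard
  by_contra! hsmall
  set T := ⌊Tval k ζ (Fintype.card V)⌋₊
  set y : ℕ → ℝ := fun t => log (Fintype.card V / #(nset edges h v t))
  have hy_lb : ∀ t ≤ T, log k + 2 * B / (K - 1) < y t := fun t ht =>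
    lt_log_div_of_le_mul hα hαlt (by exact_mod_cast card_pos.2 ⟨v, mem_nset_self t⟩) <|
      le_trans (by exact_mod_cast card_le_card (nset_mono (edges := edges) (h := h) (v := v) ht))
        hsmall
  have hrec : ∀ t < T, y (t + 1) ≤ y t - log (K - B / (y t - log k)) := fun t ht =>
    hE.log_div_card_nset_succ_le hk hinj (fun w hw => hocc w (nset_mono ht.le hw))
      (hy_lb t ht.le).le
  have hy0 : y 0 = log (Fintype.card V) := by simp [y, nset]
  have hT := hdescent y T (hy0 ▸ hYn) (fun t ht => (hy_lb t ht).le) hrec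
  have hfloor : (Tval k ζ (Fintype.card V) - 1) * log K < T * log K :=
    mul_lt_mul_of_pos_right (Nat.sub_one_lt_floor _) (log_pos hK)
  have hTval := Tval_mul_log hk ζ hn2
  rw [hy0] at hT
  simp only [Function.comp] at hlarge
  linarith
end

section
/- For any constants a, b > 0 there exists D_0 = D_0(a,b) such that for every D ≥ D_0 and every integer j ≥ 2/b one has ∏_{i=1}^{j} (1 − a/(ib + D)) ≥ j^{−a/b}·(bD)^{−a/b}·e^{−a²/(bD)}. -/
/-!
With `w_i = i b + D - a`, each factor satisfies
`1 - a/(w_i + a) = (1 + a/w_i)⁻¹ ≥ e^{-a/w_i} ≥ (w_i / w_{i-1})^{-a/b}`,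
the last step because `log (w_i / w_{i-1}) ≥ 1 - w_{i-1}/w_i = b / w_i`.
So the product telescopes to at least `((j b + D - a)/(D - a))^{-a/b}`, and for `D ≥ a + 2`,
`j b ≥ 2` the base is at most `j b D`; the factor `e^{-a²/(bD)} ≤ 1` is slack.
-/

open Real Finset

lemma exp_neg_div_le_one_sub_div_add {a v : ℝ} (ha : 0 ≤ a) (hv : 0 < v) :
    exp (-(a / v)) ≤ 1 - a / (v + a) := by
  have hva : 0 < v + a := by linarith
  calc exp (-(a / v)) = (exp (a / v))⁻¹ := exp_neg _
    _ ≤ (a / v + 1)⁻¹ := inv_anti₀ (by positivity) (add_one_le_exp _)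
    _ = 1 - a / (v + a) := by field_simp; ring

lemma div_rpow_neg_le_exp_neg {a b w : ℝ} (ha : 0 ≤ a) (hb : 0 < b) (hw : 0 < w) :
    ((w + b) / w) ^ (-(a / b)) ≤ exp (-(a / (w + b))) := by
  have hwb : 0 < w + b := by linarith
  have hlog : b / (w + b) ≤ log ((w + b) / w) := by
    have h := one_sub_inv_le_log_of_pos (div_pos hwb hw)
    rwa [inv_div, one_sub_div hwb.ne', add_sub_cancel_left] at h
  rw [rpow_def_of_pos (div_pos hwb hw), exp_le_exp]
  calc log ((w + b) / w) * -(a / b) ≤ b / (w + b) * -(a / b) :=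
        mul_le_mul_of_nonpos_right hlog (neg_nonpos.mpr (by positivity))
    _ = -(a / (w + b)) := by field_simp

lemma div_rpow_neg_le_one_sub_div {a b w : ℝ} (ha : 0 ≤ a) (hb : 0 < b) (hw : 0 < w) :
    ((w + b) / w) ^ (-(a / b)) ≤ 1 - a / (w + b + a) :=
  (div_rpow_neg_le_exp_neg ha hb hw).trans (exp_neg_div_le_one_sub_div_add ha (by linarith))

theorem rpow_neg_le_prod_one_sub_div {a b D : ℝ} (ha : 0 ≤ a) (hb : 0 < b) (haD : a < D)
    (j : ℕ) :
    ((j * b + (D - a)) / (D - a)) ^ (-(a / b)) ≤ ∏ i ∈ Icc 1 j, (1 - a / (i * b + D)) := by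
  have hu : 0 < D - a := sub_pos.mpr haD
  induction j with
  | zero => simp [hu.ne']
  | succ j ih =>
    have hw : 0 < j * b + (D - a) := by positivity
    have hsplit : ((↑(j + 1) * b + (D - a)) / (D - a)) =
        ((j * b + (D - a)) / (D - a)) * ((j * b + (D - a) + b) / (j * b + (D - a))) := by
      field_simp; push_cast; ring
    have hfactor : ((j * b + (D - a) + b) / (j * b + (D - a))) ^ (-(a / b)) ≤
        1 - a / (↑(j + 1) * b + D) := by
      convert div_rpow_neg_le_one_sub_div ha hb hw using 3
      push_cast; ring
    rw [prod_Icc_succ_top (by omega), hsplit, mul_rpow (by positivity) (by positivity)]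
    exact mul_le_mul ih hfactor (by positivity) ((rpow_nonneg (by positivity) _).trans ih)

/-- for any constants `a, b > 0` there is `D₀ = D₀(a,b)` such that for all
`D ≥ D₀` and all integers `j ≥ 2/b`,
`∏_{i=1}^{j} (1 - a/(ib + D)) ≥ j^{-a/b}·(bD)^{-a/b}·e^{-a²/(bD)}`. -/
theorem statement_12 (a b : ℝ) (ha : 0 < a) (hb : 0 < b) :
    ∃ D₀ : ℝ, ∀ D : ℝ, D₀ ≤ D → ∀ j : ℕ, 2 / b ≤ (j : ℝ) →
      (j : ℝ) ^ (-(a / b)) * (b * D) ^ (-(a / b)) * Real.exp (-(a ^ 2) / (b * D))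
        ≤ ∏ i ∈ Finset.Icc 1 j, (1 - a / ((i : ℝ) * b + D)) := by
  refine ⟨a + 2, fun D hD j hj => ?_⟩
  have hjb : 2 ≤ (j : ℝ) * b := (div_le_iff₀ hb).mp hj
  have hu : 2 ≤ D - a := by linarith
  have hbase : (j * b + (D - a)) / (D - a) ≤ j * (b * D) := by
    rw [div_le_iff₀ (by linarith)]
    nlinarith [mul_nonneg (sub_nonneg.mpr hjb) (sub_nonneg.mpr hu)]
  have hexp : exp (-(a ^ 2) / (b * D)) ≤ 1 := by
    rw [exp_le_one_iff, neg_div, neg_nonpos]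
    exact div_nonneg (sq_nonneg a) (by nlinarith)
  calc (j : ℝ) ^ (-(a / b)) * (b * D) ^ (-(a / b)) * exp (-(a ^ 2) / (b * D))
      ≤ (j * (b * D)) ^ (-(a / b)) * 1 := by
        rw [← mul_rpow (by positivity) (by nlinarith)]
        exact mul_le_mul_of_nonneg_left hexp (rpow_nonneg (by nlinarith) _)
    _ ≤ ((j * b + (D - a)) / (D - a)) ^ (-(a / b)) := by
        rw [mul_one]
        exact rpow_le_rpow_of_nonpos (by positivity) hbase (neg_nonpos.mpr (by positivity))
    _ ≤ ∏ i ∈ Icc 1 j, (1 - a / (i * b + D)) :=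
        rpow_neg_le_prod_one_sub_div ha.le hb (by linarith) j
end

section
/- Let k ≥ 2, c > 0, and p = ck/binom(n−1, k−1), and assume cn is an integer. Then for every set 𝓟 of k-uniform hypergraphs on vertex set {1,…,n}, ℙ(H_{n,cn,k} ∉ 𝓟) ≤ K·√n · ℙ(H_{n,p,k} ∉ 𝓟), where K > 0 is a constant depending only on c and k (and not on n or 𝓟), for all sufficiently large n. -/
/-! Given that it has exactly `m` edges, `H_{n,p,k}` is uniformly distributed, so
`ℙ(H_{n,p,k} ∉ 𝓟) ≥ ℙ(e(H_{n,p,k}) = m) · ℙ(H_{n,m,k} ∉ 𝓟)`. Since `ck / binom(n-1,k-1) = m / N`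
with `N = binom(n,k)`, the edge count is `Bin(N, m/N)`, and the two-sided Stirling bounds
`√(2πN) (N/e)^N ≤ N! ≤ e √N (N/e)^N` give `ℙ(Bin(N, m/N) = m) ≥ 1 / (e² √m)`. Finally
`√m = √c · √n`, and `m ≤ N` for large `n` because `N` grows at least quadratically when `k ≥ 2`. -/

open Filter Real

attribute [local instance] Classical.propDecidable

/-- Probability that `H_{n,m,k}` (a uniformly random set of `m` distinct `k`-element
edges) satisfies `P`. -/
noncomputable def probUnif (n m k : ℕ) (P : Finset (Finset (Fin n)) → Prop) : ℝ :=
  ((Finset.univ.filter (fun E : Finset (Finset (Fin n)) =>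
      E.card = m ∧ (∀ e ∈ E, e.card = k) ∧ P E)).card : ℝ) /
  ((Finset.univ.filter (fun E : Finset (Finset (Fin n)) =>
      E.card = m ∧ ∀ e ∈ E, e.card = k)).card : ℝ)

/-- Probability that `H_{n,p,k}` (each `k`-element subset an edge independently with
probability `p`) satisfies `P`. -/
noncomputable def probBinom (n k : ℕ) (p : ℝ) (P : Finset (Finset (Fin n)) → Prop) : ℝ :=
  ∑ E ∈ Finset.univ.filter (fun E : Finset (Finset (Fin n)) => ∀ e ∈ E, e.card = k),
    if P E then p ^ E.card * (1 - p) ^ (Nat.choose n k - E.card) else 0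

open scoped Nat

lemma factorial_le_exp_one_mul_sqrt_mul_div_exp_one_pow {n : ℕ} (hn : n ≠ 0) :
    (n ! : ℝ) ≤ exp 1 * √n * (n / exp 1) ^ n := by
  obtain ⟨n, rfl⟩ := Nat.exists_eq_succ_of_ne_zero hn
  have hseq : Stirling.stirlingSeq (n + 1) ≤ exp 1 / √2 :=
    Stirling.stirlingSeq_one ▸ Stirling.stirlingSeq'_antitone (Nat.zero_le n)
  rw [Stirling.stirlingSeq, div_le_iff₀ (by positivity)] at hseq
  refine hseq.trans_eq ?_
  rw [sqrt_mul zero_le_two]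
  field_simp

lemma one_le_exp_one_sq_mul_sqrt_mul_add_choose_mul_pow_mul_pow {a b : ℕ} (ha : a ≠ 0)
    (hb : b ≠ 0) :
    1 ≤ exp 1 ^ 2 * √a * ((a + b).choose a * (a / (a + b) : ℝ) ^ a * (b / (a + b) : ℝ) ^ b) := by
  set e := exp 1
  have he : 0 < e := exp_pos 1
  have hbpos : (0 : ℝ) < b := by positivity
  have key : √b * ((a + b : ℝ) ^ (a + b)) ≤
      √b * (e ^ 2 * √a * (a + b).choose a * a ^ a * b ^ b) := calc
    √b * ((a + b : ℝ) ^ (a + b)) ≤ √(2 * π * ↑(a + b)) * ((a + b : ℝ) ^ (a + b)) := by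
        gcongr
        push_cast
        nlinarith [pi_gt_three, (Nat.cast_nonneg a : (0 : ℝ) ≤ a)]
    _ = e ^ (a + b) * (√(2 * π * ↑(a + b)) * (↑(a + b) / e) ^ (a + b)) := by
        push_cast
        rw [div_pow]
        field_simp
    _ ≤ e ^ (a + b) * (a + b)! := by gcongr; exact Stirling.le_factorial_stirling _
    _ = e ^ (a + b) * ((a + b).choose a * b ! * a !) := by
        rw [add_comm a b, ← Nat.add_choose_mul_factorial_mul_factorial]
        push_cast
        ring
    _ ≤ e ^ (a + b) * ((a + b).choose a * (e * √b * (b / e) ^ b) * (e * √a * (a / e) ^ a)) := by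
        gcongr
        · exact factorial_le_exp_one_mul_sqrt_mul_div_exp_one_pow hb
        · exact factorial_le_exp_one_mul_sqrt_mul_div_exp_one_pow ha
    _ = √b * (e ^ 2 * √a * (a + b).choose a * a ^ a * b ^ b) := by
        rw [div_pow, div_pow, pow_add]
        field_simp
  have hpow := le_of_mul_le_mul_left key (sqrt_pos.2 hbpos)
  calc 1 ≤ (e ^ 2 * √a * (a + b).choose a * a ^ a * b ^ b) / (a + b : ℝ) ^ (a + b) :=
        (one_le_div (by positivity)).2 hpow
    _ = _ := by rw [div_pow, div_pow, pow_add]; field_simp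

lemma one_le_exp_one_sq_mul_sqrt_mul_choose_mul_pow_mul_pow {N m : ℕ} (hm : m ≠ 0)
    (hmN : m ≤ N) :
    1 ≤ exp 1 ^ 2 * √m * (N.choose m * (m / N : ℝ) ^ m * (1 - m / N : ℝ) ^ (N - m)) := by
  obtain rfl | hlt := hmN.eq_or_lt
  · have hm1 : (1 : ℝ) ≤ m := by exact_mod_cast Nat.one_le_iff_ne_zero.2 hm
    have he : 1 ≤ exp 1 ^ 2 := one_le_pow₀ (one_le_exp zero_le_one)
    simpa [div_self (by positivity : (m : ℝ) ≠ 0)] using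
      one_le_mul_of_one_le_of_one_le he (one_le_sqrt.2 hm1)
  obtain ⟨b, rfl⟩ := Nat.exists_eq_add_of_lt hlt
  rw [add_assoc, Nat.add_sub_cancel_left]
  have hsub : 1 - (m / ↑(m + (b + 1)) : ℝ) = ↑(b + 1) / (m + ↑(b + 1)) := by
    push_cast
    field_simp
    ring
  rw [hsub, Nat.cast_add]
  exact one_le_exp_one_sq_mul_sqrt_mul_add_choose_mul_pow_mul_pow hm b.succ_ne_zero

lemma card_uniformHypergraphs (n m k : ℕ) :
    (Finset.univ.filter (fun E : Finset (Finset (Fin n)) =>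
      E.card = m ∧ ∀ e ∈ E, e.card = k)).card = (n.choose k).choose m := by
  have : Finset.univ.filter (fun E : Finset (Finset (Fin n)) =>
      E.card = m ∧ ∀ e ∈ E, e.card = k) = (Finset.univ.powersetCard k).powersetCard m := by
    ext E
    simp [Finset.mem_powersetCard, Finset.subset_iff, and_comm]
  rw [this, Finset.card_powersetCard, Finset.card_powersetCard, Finset.card_univ,
    Fintype.card_fin]

lemma probUnif_mul_le_probBinom (n m k : ℕ) {p : ℝ} (hp₀ : 0 ≤ p) (hp₁ : p ≤ 1)
    (Q : Finset (Finset (Fin n)) → Prop) :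
    probUnif n m k Q * ((n.choose k).choose m * p ^ m * (1 - p) ^ (n.choose k - m)) ≤
      probBinom n k p Q := by
  set A := Finset.univ.filter (fun E : Finset (Finset (Fin n)) =>
    E.card = m ∧ (∀ e ∈ E, e.card = k) ∧ Q E)
  set w := p ^ m * (1 - p) ^ (n.choose k - m)
  have hA : probUnif n m k Q * (n.choose k).choose m ≤ A.card := by
    rw [probUnif, card_uniformHypergraphs]
    obtain h | h := eq_or_ne ((n.choose k).choose m : ℝ) 0
    · simp [h]
    · rw [div_mul_cancel₀ _ h]
  have hterm : ∀ E, 0 ≤ if Q E then p ^ E.card * (1 - p) ^ (n.choose k - E.card) else 0 := by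
    have := sub_nonneg.2 hp₁
    intro E
    split_ifs <;> positivity
  calc probUnif n m k Q * ((n.choose k).choose m * p ^ m * (1 - p) ^ (n.choose k - m))
      = probUnif n m k Q * (n.choose k).choose m * w := by ring
    _ ≤ A.card * w := by gcongr
    _ = ∑ E ∈ A, if Q E then p ^ E.card * (1 - p) ^ (n.choose k - E.card) else 0 := by
        rw [← nsmul_eq_mul, ← Finset.sum_const]
        refine Finset.sum_congr rfl fun E hE => ?_
        obtain ⟨hcard, -, hQ⟩ := (Finset.mem_filter.1 hE).2
        rw [if_pos hQ, hcard]
    _ ≤ probBinom n k p Q :=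
        Finset.sum_le_sum_of_subset_of_nonneg
          (fun E hE => Finset.mem_filter.2 ⟨Finset.mem_univ E, (Finset.mem_filter.1 hE).2.2.1⟩)
          fun E _ _ => hterm E

lemma mul_div_choose_sub_one_sub_one {n k : ℕ} (hk : k ≠ 0) (hkn : k ≤ n) (x : ℝ) :
    x * k / (n - 1).choose (k - 1) = x * n / n.choose k := by
  obtain ⟨n, rfl⟩ := Nat.exists_eq_succ_of_ne_zero (by omega : n ≠ 0)
  obtain ⟨k, rfl⟩ := Nat.exists_eq_succ_of_ne_zero hk
  have hid : ((n + 1 : ℕ) : ℝ) * n.choose k = (n + 1).choose (k + 1) * (k + 1 : ℕ) := by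
    exact_mod_cast Nat.add_one_mul_choose_eq n k
  have h₁ : (n.choose k : ℝ) ≠ 0 := by exact_mod_cast Nat.choose_ne_zero (by omega)
  have h₂ : ((n + 1).choose (k + 1) : ℝ) ≠ 0 := by exact_mod_cast Nat.choose_ne_zero hkn
  simp only [Nat.succ_eq_add_one, Nat.add_sub_cancel]
  rw [div_eq_div_iff h₁ h₂, mul_assoc, mul_assoc, hid]
  ring

lemma eventually_mul_le_choose {k : ℕ} (hk : 2 ≤ k) (c : ℝ) :
    ∀ᶠ n : ℕ in atTop, c * n ≤ n.choose k := by
  filter_upwards [eventually_ge_atTop (2 * k),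
    tendsto_natCast_atTop_atTop.eventually_ge_atTop (4 * k ! * c)] with n hkn hcn
  have hn : (n / 2 : ℝ) ≤ (n + 1 - k : ℕ) := by
    rw [Nat.cast_sub (by omega)]
    push_cast
    have : (2 * k : ℝ) ≤ n := by exact_mod_cast hkn
    linarith
  calc c * n ≤ (n / 2 : ℝ) ^ 2 / k ! := by
        rw [le_div_iff₀ (by positivity)]
        nlinarith [(Nat.cast_nonneg n : (0 : ℝ) ≤ n)]
    _ ≤ ((n + 1 - k : ℕ) : ℝ) ^ k / k ! := by
        gcongr
        calc (n / 2 : ℝ) ^ 2 ≤ ((n + 1 - k : ℕ) : ℝ) ^ 2 := by gcongr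
          _ ≤ ((n + 1 - k : ℕ) : ℝ) ^ k := pow_le_pow_right₀ (by norm_cast; omega) hk
    _ ≤ n.choose k := Nat.pow_le_choose k n

/-- for `k ≥ 2`, `c > 0`, `p = ck/C(n-1,k-1)`, `cn ∈ ℕ`: there is `K > 0`
depending only on `c` and `k` such that for all large `n` and every property `𝓟`,
`ℙ(H_{n,cn,k} ∉ 𝓟) ≤ K·√n·ℙ(H_{n,p,k} ∉ 𝓟)`. -/
theorem statement_15 (k : ℕ) (hk : 2 ≤ k) (c : ℝ) (hc : 0 < c) :
    ∃ K : ℝ, 0 < K ∧ ∃ n₀ : ℕ, ∀ n : ℕ, n₀ ≤ n →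
      ∀ m : ℕ, (m : ℝ) = c * n →
      ∀ P : Finset (Finset (Fin n)) → Prop,
        probUnif n m k (fun E => ¬ P E) ≤
          K * Real.sqrt n *
            probBinom n k (c * k / ((n - 1).choose (k - 1) : ℝ)) (fun E => ¬ P E) := by
  refine ⟨exp 1 ^ 2 * √c, by positivity, ?_⟩
  obtain ⟨n₀, hn₀⟩ := eventually_atTop.1 ((eventually_mul_le_choose hk c).and
    (eventually_ge_atTop k))
  refine ⟨n₀, fun n hn m hm P => ?_⟩
  obtain ⟨hcn, hkn⟩ := hn₀ n hn
  have hmN : m ≤ n.choose k := by exact_mod_cast hm ▸ hcn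
  have hm₀ : m ≠ 0 := by
    rintro rfl
    have hnpos : (0 : ℝ) < n := by exact_mod_cast (by omega : 0 < n)
    rw [Nat.cast_zero] at hm
    nlinarith
  have hN : (0 : ℝ) < n.choose k := by exact_mod_cast (Nat.choose_pos hkn)
  rw [mul_div_choose_sub_one_sub_one (by omega) hkn, ← hm]
  set p := (m / n.choose k : ℝ)
  have hp₀ : 0 ≤ p := by positivity
  have hp₁ : p ≤ 1 := div_le_one_of_le₀ (by exact_mod_cast hmN) hN.le
  have hUnif : 0 ≤ probUnif n m k (fun E => ¬ P E) := by unfold probUnif; positivity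
  calc probUnif n m k (fun E => ¬ P E)
      ≤ exp 1 ^ 2 * √m * (probUnif n m k (fun E => ¬ P E) *
          ((n.choose k).choose m * p ^ m * (1 - p) ^ (n.choose k - m))) := by
        rw [mul_left_comm]
        exact le_mul_of_one_le_right hUnif
          (one_le_exp_one_sq_mul_sqrt_mul_choose_mul_pow_mul_pow hm₀ hmN)
    _ ≤ exp 1 ^ 2 * √m * probBinom n k p (fun E => ¬ P E) := by
        gcongr
        exact probUnif_mul_le_probBinom n m k hp₀ hp₁ _
    _ = exp 1 ^ 2 * √c * √n * probBinom n k p (fun E => ¬ P E) := by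
        rw [hm, sqrt_mul hc.le]
        ring
end

section
/- Let k ≥ 4 and f(x) = x(1−e^{−x})/(k(1−e^{−x}−x e^{−x})) for x > 0. Then f(k/2) = (1/2)·(e^{k/2}−1)/(e^{k/2}−1−k/2) ≤ (1/2)(1 + 4/k) ≤ 1; consequently, since f is increasing on (0,∞), the unique positive solution ξ* of f(ξ*) = 1 satisfies ξ* ≥ k/2. -/
open Real

/-- `f(x) = x(1-e^{-x}) / (k(1-e^{-x}-x e^{-x}))`. -/
noncomputable def fFun (k : ℕ) (x : ℝ) : ℝ :=
  x * (1 - Real.exp (-x)) / (k * (1 - Real.exp (-x) - x * Real.exp (-x)))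

/-- Multiplying numerator and denominator by `e^x` clears the negative exponentials. -/
lemma fFun_eq (k : ℕ) (x : ℝ) :
    fFun k x = x * (exp x - 1) / (k * (exp x - 1 - x)) := by
  have hx : exp x ≠ 0 := (exp_pos x).ne'
  rw [fFun, exp_neg, ← mul_div_mul_right _ _ hx]
  congr 1 <;> field_simp

lemma fFun_half_self (k : ℕ) :
    fFun k ((k : ℝ) / 2) =
      (1 / 2) * (exp ((k : ℝ) / 2) - 1) / (exp ((k : ℝ) / 2) - 1 - (k : ℝ) / 2) := by
  rcases eq_or_ne k 0 with rfl | hk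
  · simp [fFun]
  · have hk' : (k : ℝ) ≠ 0 := Nat.cast_ne_zero.mpr hk
    rw [fFun_eq, mul_div_mul_comm, div_div_cancel_left' hk', one_div, mul_div_assoc]

lemma exp_sub_one_sub_pos {t : ℝ} (ht : t ≠ 0) : 0 < exp t - 1 - t := by
  linarith [add_one_lt_exp ht]

/-- Equivalent to `2 (e^t - 1 - t) ≥ t²`, the second-order Taylor bound for `exp`. -/
lemma exp_sub_one_div_exp_sub_one_sub_le {t : ℝ} (ht : 0 < t) :
    (exp t - 1) / (exp t - 1 - t) ≤ 1 + 2 / t := by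
  have hquad := quadratic_le_exp_of_nonneg ht.le
  rw [div_le_iff₀ (exp_sub_one_sub_pos ht.ne'), add_mul, one_mul, div_mul_eq_mul_div,
    ← sub_le_iff_le_add', le_div_iff₀ ht]
  nlinarith

lemma fFun_half_self_le {k : ℕ} (hk : 0 < k) :
    fFun k ((k : ℝ) / 2) ≤ (1 / 2) * (1 + 4 / (k : ℝ)) := by
  have hk' : (0 : ℝ) < k := Nat.cast_pos.mpr hk
  have hbound := exp_sub_one_div_exp_sub_one_sub_le (half_pos hk')
  rw [div_div_eq_mul_div, show (2 : ℝ) * 2 = 4 by norm_num] at hbound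
  rw [fFun_half_self, mul_div_assoc]
  gcongr

/-- for `k ≥ 4`,
`f(k/2) = (1/2)·(e^{k/2}-1)/(e^{k/2}-1-k/2) ≤ (1/2)(1+4/k) ≤ 1`; consequently, since
`f` is increasing on `(0,∞)`, the unique positive solution `ξ*` of `f(ξ*) = 1`
satisfies `ξ* ≥ k/2`. -/
theorem statement_19 (k : ℕ) (hk : 4 ≤ k)
    (hmono : StrictMonoOn (fFun k) (Set.Ioi (0 : ℝ)))
    (ξ : ℝ) (hξpos : 0 < ξ) (hfξ : fFun k ξ = 1) :
    fFun k ((k : ℝ) / 2) =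
        (1 / 2) * (Real.exp ((k : ℝ) / 2) - 1) /
          (Real.exp ((k : ℝ) / 2) - 1 - (k : ℝ) / 2) ∧
    fFun k ((k : ℝ) / 2) ≤ (1 / 2) * (1 + 4 / (k : ℝ)) ∧
    (1 / 2) * (1 + 4 / (k : ℝ)) ≤ 1 ∧
    (k : ℝ) / 2 ≤ ξ := by
  have hk4 : (4 : ℝ) ≤ k := by exact_mod_cast hk
  have hhalf : (0 : ℝ) < k / 2 := by linarith
  have hle := fFun_half_self_le (by omega : 0 < k)
  have hbound : (1 / 2) * (1 + 4 / (k : ℝ)) ≤ 1 := by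
    have : 4 / (k : ℝ) ≤ 1 := (div_le_one (by linarith)).mpr hk4
    linarith
  refine ⟨fFun_half_self k, hle, hbound, ?_⟩
  rw [← hmono.le_iff_le hhalf hξpos, hfξ]
  exact hle.trans hbound
end
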